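/- Writing ρ = A†A / tr(A†A) and perturbing A by δA = ε A [G − tr(Gρ)I] with ε > 0 small, the first-order change of a differentiable function F with gradient G is δF = 2ε tr(ρ [G − tr(Gρ)I]²) ≥ 0, with equality iff [G − tr(Gρ)I] ρ = 0. In particular the DG direction is an ascent direction. -/
import Mathlib


open Matrix
open scoped BigOperators ComplexOrder

def IsDensity {m : Type*} [Fintype m] [DecidableEq m] (ρ : Matrix m m ℂ) : Prop :=
  ρ.PosSemidef ∧ ρ.trace = 1

lemma trace_ct_mul_self_re {d : ℕ} (B : Matrix (Fin d) (Fin d) ℂ) :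
    ((Bᴴ * B).trace).re = ∑ i, ∑ j, Complex.normSq (B j i) := by
  simp [Matrix.trace, Matrix.mul_apply, Matrix.diag, Complex.re_sum, Complex.normSq_apply]

lemma trace_ct_mul_self_re_nonneg {d : ℕ} (B : Matrix (Fin d) (Fin d) ℂ) :
    0 ≤ ((Bᴴ * B).trace).re := by
  rw [trace_ct_mul_self_re]
  exact Finset.sum_nonneg fun i _ => Finset.sum_nonneg fun j _ => Complex.normSq_nonneg _

lemma trace_ct_mul_self_re_eq_zero_iff {d : ℕ} (B : Matrix (Fin d) (Fin d) ℂ) :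
    ((Bᴴ * B).trace).re = 0 ↔ B = 0 := by
  rw [trace_ct_mul_self_re]
  constructor
  · intro h
    ext j i
    have h1 := (Finset.sum_eq_zero_iff_of_nonneg
      (fun i _ => Finset.sum_nonneg fun j _ => Complex.normSq_nonneg (B j i))).mp h
    have h2 := (Finset.sum_eq_zero_iff_of_nonneg
      (fun j _ => Complex.normSq_nonneg (B j i))).mp (h1 i (Finset.mem_univ i)) j
      (Finset.mem_univ j)
    simpa [Complex.normSq_eq_zero] using h2
  · intro h; simp [h]

/-- Writing `ρ = A†A / tr(A†A)` and taking `δA = ε A M` with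
`M = G − tr(Gρ)I`, the first-order change of `F`,
`δF = tr(δA · M A† / tr(A†A)) + h.c. = 2ε tr(ρ M²)`, is nonnegative, and it
vanishes iff `Mρ = 0`; hence the DG direction is an ascent direction. -/
theorem dg_ascent_direction {d : ℕ}
    (A G : Matrix (Fin d) (Fin d) ℂ) (hG : G.IsHermitian)
    (hA : ((Aᴴ * A).trace).re ≠ 0)
    (ρ : Matrix (Fin d) (Fin d) ℂ)
    (hρ : ρ = (((Aᴴ * A).trace).re)⁻¹ • (Aᴴ * A))
    (M : Matrix (Fin d) (Fin d) ℂ)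
    (hM : M = G - (G * ρ).trace • (1 : Matrix (Fin d) (Fin d) ℂ))
    (ε : ℝ) (hε : 0 < ε) :
    2 * ((((ε • (A * M)) * ((((Aᴴ * A).trace).re)⁻¹ • (M * Aᴴ))).trace).re)
        = 2 * ε * ((ρ * (M * M)).trace).re ∧
    0 ≤ 2 * ε * ((ρ * (M * M)).trace).re ∧
    (2 * ε * ((ρ * (M * M)).trace).re = 0 ↔ M * ρ = 0) := by
  set c : ℝ := ((Aᴴ * A).trace).re with hc
  have hcpos : 0 < c := lt_of_le_of_ne (trace_ct_mul_self_re_nonneg A) (Ne.symm hA)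
  -- ρ is Hermitian
  have hρH : ρᴴ = ρ := by
    rw [hρ, conjTranspose_smul, conjTranspose_mul, conjTranspose_conjTranspose]
    simp
  -- M is Hermitian
  have htr : star ((G * ρ).trace) = (G * ρ).trace := by
    calc star ((G * ρ).trace) = ((G * ρ)ᴴ).trace := (trace_conjTranspose _).symm
      _ = (ρᴴ * Gᴴ).trace := by rw [conjTranspose_mul]
      _ = (ρ * G).trace := by rw [hρH, hG.eq]
      _ = (G * ρ).trace := trace_mul_comm _ _
  have hMH : Mᴴ = M := by
    rw [hM, conjTranspose_sub, hG.eq, conjTranspose_smul, conjTranspose_one, htr]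
  have h2 : ((A * M) * (M * Aᴴ)).trace = ((Aᴴ * A) * (M * M)).trace := by
    calc ((A * M) * (M * Aᴴ)).trace = ((A * (M * M)) * Aᴴ).trace := by
          rw [Matrix.mul_assoc, Matrix.mul_assoc, Matrix.mul_assoc]
      _ = (Aᴴ * (A * (M * M))).trace := trace_mul_comm _ _
      _ = ((Aᴴ * A) * (M * M)).trace := by rw [Matrix.mul_assoc]
  -- key trace identity
  have hT : ((A * M)ᴴ * (A * M)).trace = ((Aᴴ * A) * (M * M)).trace := by
    calc ((A * M)ᴴ * (A * M)).trace = ((M * Aᴴ) * (A * M)).trace := by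
          rw [conjTranspose_mul, hMH]
      _ = ((A * M) * (M * Aᴴ)).trace := trace_mul_comm _ _
      _ = ((Aᴴ * A) * (M * M)).trace := h2
  set T : ℝ := (((Aᴴ * A) * (M * M)).trace).re with hTdef
  have hTnn : 0 ≤ T := by
    have := trace_ct_mul_self_re_nonneg (A * M)
    rwa [hT] at this
  have hρtr : ((ρ * (M * M)).trace).re = c⁻¹ * T := by
    rw [hρ, Matrix.smul_mul, trace_smul]
    simp [hTdef]
  refine ⟨?_, ?_, ?_⟩
  · have h1 : (ε • (A * M)) * ((c : ℝ)⁻¹ • (M * Aᴴ)) =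
        (ε * c⁻¹) • ((A * M) * (M * Aᴴ)) := by
      rw [Matrix.smul_mul, Matrix.mul_smul, smul_smul]
    rw [h1, trace_smul, h2, hρtr]
    simp [Complex.smul_re]
    ring
  · rw [hρtr]
    positivity
  · rw [hρtr]
    constructor
    · intro h
      have h3 : (2 * ε * c⁻¹) * T = 0 := by linear_combination h
      have hT0 : T = 0 :=
        (mul_eq_zero.mp h3).resolve_left (by positivity : (0:ℝ) < 2 * ε * c⁻¹).ne'
      have hAM : A * M = 0 := by
        rw [hTdef, ← hT] at hT0
        exact (trace_ct_mul_self_re_eq_zero_iff _).mp hT0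
      have hAAM : Aᴴ * A * M = 0 := by
        rw [Matrix.mul_assoc, hAM, Matrix.mul_zero]
      have hMAA : M * (Aᴴ * A) = 0 := by
        have := congrArg conjTranspose hAAM
        rwa [conjTranspose_mul, conjTranspose_mul, conjTranspose_conjTranspose,
          hMH, conjTranspose_zero] at this
      rw [hρ, Matrix.mul_smul, hMAA, smul_zero]
    · intro h
      have hMAA : M * (Aᴴ * A) = 0 := by
        rw [hρ, Matrix.mul_smul] at h
        exact (smul_eq_zero_iff_right (inv_ne_zero hcpos.ne')).mp h
      have hAAM : Aᴴ * A * M = 0 := by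
        have := congrArg conjTranspose hMAA
        rwa [conjTranspose_mul, conjTranspose_mul, conjTranspose_conjTranspose,
          hMH, conjTranspose_zero] at this
      have hAM : A * M = 0 := (conjTranspose_mul_self_mul_eq_zero A M).mp hAAM
      have hT0 : T = 0 := by
        rw [hTdef, ← hT, hAM]
        simp
      rw [hT0]
      ring
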